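/- In the Gaudin realization, the generating function of integrals of motion is invariant under the global osp(1|2) action: for every λ ∈ ℂ ∖ {z₁,…,z_N} and every Y ∈ {h, X⁺, X⁻, v⁺, v⁻}, the global generator Y_gl = Σ_{a=1}^{N} Y_a commutes with t(λ), i.e. [t(λ), Y_gl] = 0. -/

import Mathlib

/-- osp(1|2) Gaudin model data: sites, inhomogeneity parameters, and local
osp(1|2) operators with super-commutation relations across sites. -/
structure OspGaudinData (N : ℕ) (H : Type*) [AddCommGroup H] [Module ℂ H] where
  z : Fin N → ℂ
  z_inj : Function.Injective z
  h : Fin N → Module.End ℂ H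
  Xp : Fin N → Module.End ℂ H
  Xm : Fin N → Module.End ℂ H
  vp : Fin N → Module.End ℂ H
  vm : Fin N → Module.End ℂ H
  rel_hXp : ∀ a, h a * Xp a - Xp a * h a = (2:ℂ) • Xp a
  rel_hXm : ∀ a, h a * Xm a - Xm a * h a = (-2:ℂ) • Xm a
  rel_XpXm : ∀ a, Xp a * Xm a - Xm a * Xp a = h a
  rel_hvp : ∀ a, h a * vp a - vp a * h a = vp a
  rel_hvm : ∀ a, h a * vm a - vm a * h a = -vm a
  rel_vpvm : ∀ a, vp a * vm a + vm a * vp a = -h a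
  rel_Xmvp : ∀ a, Xm a * vp a - vp a * Xm a = vm a
  rel_Xpvm : ∀ a, Xp a * vm a - vm a * Xp a = vp a
  rel_vpvp : ∀ a, vp a * vp a = Xp a
  rel_vmvm : ∀ a, vm a * vm a = -Xm a
  rel_Xpvp : ∀ a, Xp a * vp a = vp a * Xp a
  rel_Xmvm : ∀ a, Xm a * vm a = vm a * Xm a
  even_comm : ∀ a b, a ≠ b → ∀ Y ∈ ({h a, Xp a, Xm a} : Set (Module.End ℂ H)),
      ∀ Z ∈ ({h b, Xp b, Xm b, vp b, vm b} : Set (Module.End ℂ H)), Y * Z = Z * Y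
  odd_anticomm : ∀ a b, a ≠ b → ∀ Y ∈ ({vp a, vm a} : Set (Module.End ℂ H)),
      ∀ Z ∈ ({vp b, vm b} : Set (Module.End ℂ H)), Y * Z + Z * Y = 0

namespace OspGaudinData

variable {N : ℕ} {H : Type*} [AddCommGroup H] [Module ℂ H]

/-- The Gaudin realization h(λ). -/
noncomputable def hl (G : OspGaudinData N H) (lam : ℂ) : Module.End ℂ H :=
  ∑ a, ((lam - G.z a)⁻¹) • G.h a

noncomputable def Xpl (G : OspGaudinData N H) (lam : ℂ) : Module.End ℂ H :=
  ∑ a, ((lam - G.z a)⁻¹) • G.Xp a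

noncomputable def Xml (G : OspGaudinData N H) (lam : ℂ) : Module.End ℂ H :=
  ∑ a, ((lam - G.z a)⁻¹) • G.Xm a

noncomputable def vpl (G : OspGaudinData N H) (lam : ℂ) : Module.End ℂ H :=
  ∑ a, ((lam - G.z a)⁻¹) • G.vp a

noncomputable def vml (G : OspGaudinData N H) (lam : ℂ) : Module.End ℂ H :=
  ∑ a, ((lam - G.z a)⁻¹) • G.vm a

/-- h′(λ) = −Σ_a h_a/(λ − z_a)². -/
noncomputable def hl' (G : OspGaudinData N H) (lam : ℂ) : Module.End ℂ H :=
  -∑ a, (((lam - G.z a)^2)⁻¹) • G.h a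

/-- The generating function t(λ) of the integrals of motion. -/
noncomputable def tOp (G : OspGaudinData N H) (lam : ℂ) : Module.End ℂ H :=
  G.hl lam * G.hl lam + G.hl' lam + (4:ℂ) • (G.Xpl lam * G.Xml lam)
    + (2:ℂ) • (G.vpl lam * G.vml lam)

/-- The Gaudin Hamiltonian at site `a`. -/
noncomputable def Gham (G : OspGaudinData N H) (a : Fin N) : Module.End ℂ H :=
  ∑ b ∈ Finset.univ.erase a, ((G.z a - G.z b)⁻¹) •
    (G.h a * G.h b + (2:ℂ) • (G.Xp a * G.Xm b + G.Xm a * G.Xp b)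
      + (G.vp a * G.vm b - G.vm a * G.vp b))

end OspGaudinData

/-! The currents `Y_c = ∑ a, c a • Y a` satisfy the local (super)commutation relations with the
weights multiplied sitewise, `[Y_c, W_d] = [Y, W]_{c d}`, because operators at different sites
(super)commute. The global generators are the currents with weight `1`, so the (super) Leibniz
rule expresses `[t(λ), Y_gl]` through currents with weights `c = 1/(λ - z)` and `c²`; the `h′`
term, which is minus the current of `h` with weights `c²`, is exactly what makes them cancel.
Nothing depends on the particular weights: `t` built from any weights `c` is invariant. -/

open Finset

section Current

variable {ι K R : Type*} [Fintype ι] [CommRing K] [Ring R] [Algebra K R]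

def current (c : ι → K) (Y : ι → R) : R := ∑ a, c a • Y a

theorem current_one (Y : ι → R) : current (1 : ι → K) Y = ∑ a, Y a := by
  simp [current]

theorem current_smul (c : ι → K) (k : K) (Y : ι → R) :
    current c (fun a => k • Y a) = k • current c Y := by
  simp only [current, smul_sum, smul_comm k]

theorem current_neg (c : ι → K) (Y : ι → R) : current c (fun a => -Y a) = -current c Y := by
  simp only [current, smul_neg, sum_neg_distrib]

theorem current_zero (c : ι → K) : current c (fun _ => (0 : R)) = 0 := by
  simp [current]

theorem current_mul_sub_smul_mul (c d : ι → K) (ε : K) {Y W : ι → R}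
    (hYW : ∀ a b, a ≠ b → Y a * W b = ε • (W b * Y a)) :
    current c Y * current d W - ε • (current d W * current c Y)
      = current (c * d) fun a => Y a * W a - ε • (W a * Y a) := by
  calc current c Y * current d W - ε • (current d W * current c Y)
      = ∑ a, ∑ b, (c a * d b) • (Y a * W b - ε • (W b * Y a)) := by
        simp only [current, Fintype.sum_mul_sum, smul_mul_smul_comm, smul_sub, smul_sum,
          sum_sub_distrib, smul_comm ε, mul_comm (d _)]
        exact congrArg _ sum_comm
    _ = _ := sum_congr rfl fun a _ => Fintype.sum_eq_single a fun b hab => by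
        rw [hYW a b hab.symm, sub_self, smul_zero]

theorem lie_current_current (c d : ι → K) {Y W : ι → R}
    (hYW : ∀ a b, a ≠ b → Y a * W b = W b * Y a) :
    ⁅current c Y, current d W⁆ = current (c * d) fun a => ⁅Y a, W a⁆ := by
  simpa only [one_smul, Ring.lie_def] using
    current_mul_sub_smul_mul (Y := Y) (W := W) c d 1 (by simpa only [one_smul] using hYW)

theorem anticomm_current_current (c d : ι → K) {Y W : ι → R}
    (hYW : ∀ a b, a ≠ b → Y a * W b + W b * Y a = 0) :
    current c Y * current d W + current d W * current c Y
      = current (c * d) fun a => Y a * W a + W a * Y a := by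
  simpa only [neg_one_smul, sub_neg_eq_add] using
    current_mul_sub_smul_mul (Y := Y) (W := W) c d (-1) fun a b hab => by
      rw [neg_one_smul]; exact eq_neg_of_add_eq_zero_left (hYW a b hab)

end Current

namespace OspGaudinData

variable {N : ℕ} {H : Type*} [AddCommGroup H] [Module ℂ H] (G : OspGaudinData N H)

noncomputable def weights (lam : ℂ) : Fin N → ℂ := fun a => (lam - G.z a)⁻¹

noncomputable def tOfWeights (c : Fin N → ℂ) : Module.End ℂ H :=
  current c G.h * current c G.h - current (c * c) G.h
    + (4 : ℂ) • (current c G.Xp * current c G.Xm) + (2 : ℂ) • (current c G.vp * current c G.vm)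

theorem tOp_eq_tOfWeights (lam : ℂ) : G.tOp lam = G.tOfWeights (G.weights lam) := by
  simp only [tOp, tOfWeights, hl, hl', Xpl, Xml, vpl, vml, current, weights, Pi.mul_apply,
    sq, mul_inv, sub_eq_add_neg]

theorem mul_comm_of_ne {Y W : Fin N → Module.End ℂ H}
    (hY : ∀ a, Y a ∈ ({G.h a, G.Xp a, G.Xm a} : Set (Module.End ℂ H)))
    (hW : ∀ b, W b ∈ ({G.h b, G.Xp b, G.Xm b, G.vp b, G.vm b} : Set (Module.End ℂ H))) :
    ∀ a b, a ≠ b → Y a * W b = W b * Y a :=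
  fun a b hab => G.even_comm a b hab _ (hY a) _ (hW b)

theorem mul_add_mul_eq_zero_of_ne {Y W : Fin N → Module.End ℂ H}
    (hY : ∀ a, Y a ∈ ({G.vp a, G.vm a} : Set (Module.End ℂ H)))
    (hW : ∀ b, W b ∈ ({G.vp b, G.vm b} : Set (Module.End ℂ H))) :
    ∀ a b, a ≠ b → Y a * W b + W b * Y a = 0 :=
  fun a b hab => G.odd_anticomm a b hab _ (hY a) _ (hW b)

section CurrentRelations

variable (c d : Fin N → ℂ)

theorem lie_h_h : ⁅current c G.h, current d G.h⁆ = 0 := by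
  rw [lie_current_current c d (G.mul_comm_of_ne (by simp) (by simp))]
  simp only [Ring.lie_def, sub_self, current_zero]

theorem lie_Xp_Xp : ⁅current c G.Xp, current d G.Xp⁆ = 0 := by
  rw [lie_current_current c d (G.mul_comm_of_ne (by simp) (by simp))]
  simp only [Ring.lie_def, sub_self, current_zero]

theorem lie_Xm_Xm : ⁅current c G.Xm, current d G.Xm⁆ = 0 := by
  rw [lie_current_current c d (G.mul_comm_of_ne (by simp) (by simp))]
  simp only [Ring.lie_def, sub_self, current_zero]

theorem lie_h_Xp : ⁅current c G.h, current d G.Xp⁆ = (2 : ℂ) • current (c * d) G.Xp := by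
  rw [lie_current_current c d (G.mul_comm_of_ne (by simp) (by simp))]
  simp only [Ring.lie_def, G.rel_hXp, current_smul]

theorem lie_h_Xm : ⁅current c G.h, current d G.Xm⁆ = (-2 : ℂ) • current (c * d) G.Xm := by
  rw [lie_current_current c d (G.mul_comm_of_ne (by simp) (by simp))]
  simp only [Ring.lie_def, G.rel_hXm, current_smul]

theorem lie_Xp_Xm : ⁅current c G.Xp, current d G.Xm⁆ = current (c * d) G.h := by
  rw [lie_current_current c d (G.mul_comm_of_ne (by simp) (by simp))]
  simp only [Ring.lie_def, G.rel_XpXm]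

theorem lie_h_vp : ⁅current c G.h, current d G.vp⁆ = current (c * d) G.vp := by
  rw [lie_current_current c d (G.mul_comm_of_ne (by simp) (by simp))]
  simp only [Ring.lie_def, G.rel_hvp]

theorem lie_h_vm : ⁅current c G.h, current d G.vm⁆ = -current (c * d) G.vm := by
  rw [lie_current_current c d (G.mul_comm_of_ne (by simp) (by simp))]
  simp only [Ring.lie_def, G.rel_hvm, current_neg]

theorem lie_Xp_vp : ⁅current c G.Xp, current d G.vp⁆ = 0 := by
  rw [lie_current_current c d (G.mul_comm_of_ne (by simp) (by simp))]
  simp only [Ring.lie_def, G.rel_Xpvp, sub_self, current_zero]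

theorem lie_Xp_vm : ⁅current c G.Xp, current d G.vm⁆ = current (c * d) G.vp := by
  rw [lie_current_current c d (G.mul_comm_of_ne (by simp) (by simp))]
  simp only [Ring.lie_def, G.rel_Xpvm]

theorem lie_Xm_vp : ⁅current c G.Xm, current d G.vp⁆ = current (c * d) G.vm := by
  rw [lie_current_current c d (G.mul_comm_of_ne (by simp) (by simp))]
  simp only [Ring.lie_def, G.rel_Xmvp]

theorem lie_Xm_vm : ⁅current c G.Xm, current d G.vm⁆ = 0 := by
  rw [lie_current_current c d (G.mul_comm_of_ne (by simp) (by simp))]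
  simp only [Ring.lie_def, G.rel_Xmvm, sub_self, current_zero]

theorem anticomm_vp_vp :
    current c G.vp * current d G.vp + current d G.vp * current c G.vp
      = (2 : ℂ) • current (c * d) G.Xp := by
  rw [anticomm_current_current c d (G.mul_add_mul_eq_zero_of_ne (by simp) (by simp))]
  simp only [G.rel_vpvp, ← two_smul ℂ, current_smul]

theorem anticomm_vp_vm :
    current c G.vp * current d G.vm + current d G.vm * current c G.vp
      = -current (c * d) G.h := by
  rw [anticomm_current_current c d (G.mul_add_mul_eq_zero_of_ne (by simp) (by simp))]
  simp only [G.rel_vpvm, current_neg]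

theorem anticomm_vm_vm :
    current c G.vm * current d G.vm + current d G.vm * current c G.vm
      = (-2 : ℂ) • current (c * d) G.Xm := by
  rw [anticomm_current_current c d (G.mul_add_mul_eq_zero_of_ne (by simp) (by simp))]
  simp only [G.rel_vmvm, ← two_smul ℂ, neg_smul, ← smul_neg, current_smul, current_neg]

end CurrentRelations

/- In each linear combination below, the first seven terms are the Leibniz expansion of
`[t, Y_gl]`; the remaining ones cancel what is left, by the current relations with weights `c, c`. -/

variable (c : Fin N → ℂ)

theorem lie_tOfWeights_sum_h : ⁅G.tOfWeights c, ∑ a, G.h a⁆ = 0 := by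
  rw [← current_one (K := ℂ), tOfWeights]
  linear_combination (norm := noncomm_ring [Ring.lie_def, neg_smul, ofNat_smul_eq_nsmul])
    current c G.h * G.lie_h_h c 1 + G.lie_h_h c 1 * current c G.h - G.lie_h_h (c * c) 1
      - 4 * (current c G.Xp * G.lie_h_Xm 1 c) - 4 * (G.lie_h_Xp 1 c * current c G.Xm)
      - 2 * (current c G.vp * G.lie_h_vm 1 c) - 2 * (G.lie_h_vp 1 c * current c G.vm)

theorem lie_tOfWeights_sum_Xp : ⁅G.tOfWeights c, ∑ a, G.Xp a⁆ = 0 := by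
  rw [← current_one (K := ℂ), tOfWeights]
  linear_combination (norm := noncomm_ring [Ring.lie_def, neg_smul, ofNat_smul_eq_nsmul])
    current c G.h * G.lie_h_Xp c 1 + G.lie_h_Xp c 1 * current c G.h - G.lie_h_Xp (c * c) 1
      - 4 * (current c G.Xp * G.lie_Xp_Xm 1 c) + 4 * (G.lie_Xp_Xp c 1 * current c G.Xm)
      - 2 * (current c G.vp * G.lie_Xp_vm 1 c) - 2 * (G.lie_Xp_vp 1 c * current c G.vm)
      + 2 * G.lie_h_Xp c c - G.anticomm_vp_vp c c

theorem lie_tOfWeights_sum_Xm : ⁅G.tOfWeights c, ∑ a, G.Xm a⁆ = 0 := by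
  rw [← current_one (K := ℂ), tOfWeights]
  linear_combination (norm := noncomm_ring [Ring.lie_def, neg_smul, ofNat_smul_eq_nsmul])
    current c G.h * G.lie_h_Xm c 1 + G.lie_h_Xm c 1 * current c G.h - G.lie_h_Xm (c * c) 1
      + 4 * (current c G.Xp * G.lie_Xm_Xm c 1) + 4 * (G.lie_Xp_Xm c 1 * current c G.Xm)
      - 2 * (current c G.vp * G.lie_Xm_vm 1 c) - 2 * (G.lie_Xm_vp 1 c * current c G.vm)
      + 2 * G.lie_h_Xm c c - G.anticomm_vm_vm c c

theorem lie_tOfWeights_sum_vp : ⁅G.tOfWeights c, ∑ a, G.vp a⁆ = 0 := by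
  rw [← current_one (K := ℂ), tOfWeights]
  linear_combination (norm := noncomm_ring [Ring.lie_def, neg_smul, ofNat_smul_eq_nsmul])
    current c G.h * G.lie_h_vp c 1 + G.lie_h_vp c 1 * current c G.h - G.lie_h_vp (c * c) 1
      + 4 * (current c G.Xp * G.lie_Xm_vp c 1) + 4 * (G.lie_Xp_vp c 1 * current c G.Xm)
      + 2 * (current c G.vp * G.anticomm_vp_vm 1 c) - 2 * (G.anticomm_vp_vp c 1 * current c G.vm)
      + G.lie_h_vp c c

theorem lie_tOfWeights_sum_vm : ⁅G.tOfWeights c, ∑ a, G.vm a⁆ = 0 := by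
  rw [← current_one (K := ℂ), tOfWeights]
  linear_combination (norm := noncomm_ring [Ring.lie_def, neg_smul, ofNat_smul_eq_nsmul])
    current c G.h * G.lie_h_vm c 1 + G.lie_h_vm c 1 * current c G.h - G.lie_h_vm (c * c) 1
      + 4 * (current c G.Xp * G.lie_Xm_vm c 1) + 4 * (G.lie_Xp_vm c 1 * current c G.Xm)
      + 2 * (current c G.vp * G.anticomm_vm_vm c 1) - 2 * (G.anticomm_vp_vm c 1 * current c G.vm)
      + G.lie_h_vm c c

end OspGaudinData

theorem tOp_global_invariance_general {N : ℕ} {H : Type*} [AddCommGroup H] [Module ℂ H]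
    (G : OspGaudinData N H) (lam : ℂ) :
    (G.tOp lam * (∑ a, G.h a) - (∑ a, G.h a) * G.tOp lam = 0) ∧
    (G.tOp lam * (∑ a, G.Xp a) - (∑ a, G.Xp a) * G.tOp lam = 0) ∧
    (G.tOp lam * (∑ a, G.Xm a) - (∑ a, G.Xm a) * G.tOp lam = 0) ∧
    (G.tOp lam * (∑ a, G.vp a) - (∑ a, G.vp a) * G.tOp lam = 0) ∧
    (G.tOp lam * (∑ a, G.vm a) - (∑ a, G.vm a) * G.tOp lam = 0) := by
  simp only [← Ring.lie_def, G.tOp_eq_tOfWeights]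
  exact ⟨G.lie_tOfWeights_sum_h _, G.lie_tOfWeights_sum_Xp _, G.lie_tOfWeights_sum_Xm _,
    G.lie_tOfWeights_sum_vp _, G.lie_tOfWeights_sum_vm _⟩

/-- t(λ) is invariant under the global osp(1|2) action, i.e. it
commutes with every global generator Y_gl = Σ_a Y_a. -/
theorem tOp_global_invariance {N : ℕ} {H : Type*} [AddCommGroup H] [Module ℂ H]
    (hN : 1 ≤ N) (G : OspGaudinData N H) (lam : ℂ) (hlam : ∀ a, lam ≠ G.z a) :
    (G.tOp lam * (∑ a, G.h a) - (∑ a, G.h a) * G.tOp lam = 0) ∧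
    (G.tOp lam * (∑ a, G.Xp a) - (∑ a, G.Xp a) * G.tOp lam = 0) ∧
    (G.tOp lam * (∑ a, G.Xm a) - (∑ a, G.Xm a) * G.tOp lam = 0) ∧
    (G.tOp lam * (∑ a, G.vp a) - (∑ a, G.vp a) * G.tOp lam = 0) ∧
    (G.tOp lam * (∑ a, G.vm a) - (∑ a, G.vm a) * G.tOp lam = 0) :=
  tOp_global_invariance_general G lam
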